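/- arXiv:2104.06581 — 11 statements merged into one kernel-verified Lean document; each statement's English description precedes it below -/
import Mathlib

section
/- Let S_t and S_c be k×k symmetric positive definite matrices and n_t, n_c, n positive reals with n = n_t + n_c. Then n_c²·S_c·S_t⁻¹ + n_t²·S_t·S_c⁻¹ ⪰ 2·n_t·n_c·I in the sense that the symmetrized versions satisfy the Loewner inequality; equivalently, (1/n²)(n_c²·S_t⁻¹ + n_t²·S_c⁻¹)(S_t + S_c), when conjugated appropriately, has all eigenvalues at least 1. More precisely: (1/n²)(n_c²·S_t⁻¹ + n_t²·S_c⁻¹) ⪰ (S_t + S_c)⁻¹. -/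
/-! With weights `a = n_t / n` and `b = n_c / n`, so that `a + b = 1`, and `M = S_t + S_c`,
congruence by `M` turns the difference of the two sides into
`M (b² S_t⁻¹ + a² S_c⁻¹ - M⁻¹) M = C (S_t⁻¹ + S_c⁻¹) C` with `C = b S_c - a S_t`,
which is positive semidefinite because `C` is Hermitian. -/

open scoped MatrixOrder ComplexOrder

namespace Matrix

variable {n : Type*} [Fintype n] [DecidableEq n]

theorem add_mul_sq_smul_inv_add_sq_smul_inv_sub_inv_mul_add {S R : Type*} [CommRing S]
    [CommRing R] [Algebra S R] {A B : Matrix n n R} (hA : IsUnit A) (hB : IsUnit B)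
    (hAB : IsUnit (A + B)) {a b : S} (hab : a + b = 1) :
    (A + B) * (b ^ 2 • A⁻¹ + a ^ 2 • B⁻¹ - (A + B)⁻¹) * (A + B) =
      (b • B - a • A) * (A⁻¹ + B⁻¹) * (b • B - a • A) := by
  rw [isUnit_iff_isUnit_det] at hA hB hAB
  obtain rfl : b = 1 - a := by rw [← hab]; ring
  rw [Matrix.mul_sub, Matrix.sub_mul, mul_nonsing_inv _ hAB, Matrix.one_mul]
  simp only [Matrix.mul_add, Matrix.add_mul, Matrix.sub_mul, Matrix.mul_sub, Matrix.mul_smul,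
    Matrix.smul_mul, mul_nonsing_inv _ hA, mul_nonsing_inv _ hB, Matrix.one_mul,
    nonsing_inv_mul_cancel_right _ _ hA, nonsing_inv_mul_cancel_right _ _ hB]
  module

theorem PosDef.inv_add_le_sq_smul_inv_add_sq_smul_inv {𝕜 : Type*} [RCLike 𝕜]
    {A B : Matrix n n 𝕜} (hA : A.PosDef) (hB : B.PosDef) {a b : ℝ} (hab : a + b = 1) :
    (A + B)⁻¹ ≤ b ^ 2 • A⁻¹ + a ^ 2 • B⁻¹ := by
  have hAB : (A + B).PosDef := hA.add hB
  set C := b • B - a • A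
  have hC : Cᴴ = C := by simp [C, hA.isHermitian.eq, hB.isHermitian.eq]
  have hcongr : (C * (A⁻¹ + B⁻¹) * C).PosSemidef := by
    simpa only [hC] using (hA.inv.posSemidef.add hB.inv.posSemidef).conjTranspose_mul_mul_same C
  rwa [le_iff, ← IsUnit.posSemidef_star_left_conjugate_iff hAB.isUnit, star_eq_conjTranspose,
    hAB.isHermitian.eq,
    add_mul_sq_smul_inv_add_sq_smul_inv_sub_inv_mul_add hA.isUnit hB.isUnit hAB.isUnit hab]

end Matrix

/-- For symmetric positive definite `S_t, S_c` and positive reals `n_t, n_c` with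
`n = n_t + n_c`, we have `(1/n²)(n_c² S_t⁻¹ + n_t² S_c⁻¹) ⪰ (S_t + S_c)⁻¹` in the
Loewner order. -/
theorem uri_mri_total_variance_loewner {k : ℕ}
    (St Sc : Matrix (Fin k) (Fin k) ℝ) (hSt : St.PosDef) (hSc : Sc.PosDef)
    (nt nc n : ℝ) (hnt : 0 < nt) (hnc : 0 < nc) (hn : n = nt + nc) :
    ((1 / n ^ 2 : ℝ) • (nc ^ 2 • St⁻¹ + nt ^ 2 • Sc⁻¹) - (St + Sc)⁻¹).PosSemidef := by
  have hn0 : n ≠ 0 := by rw [hn]; positivity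
  have hweights : nt / n + nc / n = 1 := by rw [← add_div, ← hn, div_self hn0]
  have hscale : (1 / n ^ 2 : ℝ) • (nc ^ 2 • St⁻¹ + nt ^ 2 • Sc⁻¹) =
      (nc / n) ^ 2 • St⁻¹ + (nt / n) ^ 2 • Sc⁻¹ := by
    module
  rw [hscale, ← Matrix.le_iff]
  exact hSt.inv_add_le_sq_smul_inv_add_sq_smul_inv hSc hweights
end

section
/- Let S_t and S_c be k×k symmetric positive definite matrices and n_t, n_c > 0 with n = n_t + n_c. If n_t·S_t ⪰ n_c·S_c (Loewner order), then (n/n_c)²·(S_t + S_c)⁻¹·S_t·(S_t + S_c)⁻¹ ⪰ S_t⁻¹. -/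
/-!
Put `r = n_t / n_c`, so that `n / n_c = 1 + r` and `S_c ⪯ r S_t`. Conjugating by
`(S_t + S_c)⁻¹`, the claim becomes `(S_t + S_c) S_t⁻¹ (S_t + S_c) ⪯ (1 + r)² S_t`, that is
`2 S_c + S_c S_t⁻¹ S_c ⪯ (r² + 2r) S_t`. A Schur complement argument gives
`S_c S_t⁻¹ S_c ⪯ r S_c`, and what is left is `(r + 2) (r S_t - S_c) ⪰ 0`.
-/

open scoped MatrixOrder ComplexOrder

namespace Matrix

variable {n 𝕜 : Type*} [Fintype n] [DecidableEq n] [RCLike 𝕜]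

/-- The block matrix `[[A, B], [B, B]]` has Schur complements `A - B` (of `B`) and
`B - B A⁻¹ B` (of `A`), so one is positive semidefinite iff the other is. -/
theorem PosDef.mul_inv_mul_le_self {A B : Matrix n n 𝕜} (hA : A.PosDef) (hB : B.PosDef)
    (hBA : B ≤ A) : B * A⁻¹ * B ≤ B := by
  have := hA.isUnit.invertible
  have := hB.isUnit.invertible
  have hblock : (fromBlocks A B Bᴴ B).PosSemidef := by
    rw [PosDef.fromBlocks₂₂ A B hB, hB.isHermitian.eq, mul_inv_of_invertible, Matrix.one_mul]
    exact hBA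
  simpa only [le_iff, hB.isHermitian.eq] using (PosDef.fromBlocks₁₁ B B hA).mp hblock

theorem PosDef.mul_inv_mul_le_smul {A B : Matrix n n 𝕜} (hA : A.PosDef) (hB : B.PosDef) {c : 𝕜}
    (hc : 0 < c) (hBA : B ≤ c • A) : B * A⁻¹ * B ≤ c • B := by
  have := hA.isUnit.invertible
  have := invertibleOfNonzero hc.ne'
  have h := (hA.smul hc).mul_inv_mul_le_self hB hBA
  rw [Matrix.inv_smul A c (isUnit_det_of_invertible A), invOf_eq_inv, mul_smul_comm,
    smul_mul_assoc] at h
  simpa [smul_smul, hc.ne'] using smul_le_smul_of_nonneg_left h hc.le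

end Matrix

/-- For symmetric positive definite `S_t, S_c` and positive reals `n_t, n_c` with
`n = n_t + n_c`, if `n_t • S_t ⪰ n_c • S_c` then
`(n/n_c)² (S_t + S_c)⁻¹ S_t (S_t + S_c)⁻¹ ⪰ S_t⁻¹` in the Loewner order. -/
theorem uri_variance_ge_mri_variance_loewner {k : ℕ}
    (St Sc : Matrix (Fin k) (Fin k) ℝ) (hSt : St.PosDef) (hSc : Sc.PosDef)
    (nt nc n : ℝ) (hnt : 0 < nt) (hnc : 0 < nc) (hn : n = nt + nc)
    (hord : (nt • St - nc • Sc).PosSemidef) :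
    ((n / nc) ^ 2 • ((St + Sc)⁻¹ * St * (St + Sc)⁻¹) - St⁻¹).PosSemidef := by
  set r := nt / nc with hr_def
  have hr : 0 < r := div_pos hnt hnc
  have := hSt.isUnit.invertible
  have := (hSt.add hSc).isUnit.invertible
  have hgap : 0 ≤ r • St - Sc := by
    have h := hord.smul (inv_nonneg.2 hnc.le)
    rwa [smul_sub, smul_smul, smul_smul, inv_mul_cancel₀ hnc.ne', one_smul, inv_mul_eq_div,
      ← Matrix.nonneg_iff_posSemidef] at h
  have hsandwich : (St + Sc) * St⁻¹ * (St + Sc) ≤ (n / nc) ^ 2 • St := calc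
      _ = St + (2 : ℝ) • Sc + Sc * St⁻¹ * Sc := by
        simp only [Matrix.add_mul, Matrix.mul_add, Matrix.mul_inv_of_invertible,
          Matrix.inv_mul_cancel_right_of_invertible, Matrix.one_mul]
        module
      _ ≤ St + (2 : ℝ) • Sc + r • Sc := by
        gcongr
        exact hSt.mul_inv_mul_le_smul hSc hr (sub_nonneg.1 hgap)
      _ ≤ (n / nc) ^ 2 • St := by
        rw [← sub_nonneg, show n / nc = 1 + r by rw [hn, hr_def]; field_simp; ring]
        convert smul_nonneg (by positivity : 0 ≤ r + 2) hgap using 1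
        module
  rw [← Matrix.le_iff]
  calc St⁻¹ = (St + Sc)⁻¹ * ((St + Sc) * St⁻¹ * (St + Sc)) * (St + Sc)⁻¹ := by
        simp [Matrix.mul_assoc]
    _ ≤ (St + Sc)⁻¹ * ((n / nc) ^ 2 • St) * (St + Sc)⁻¹ :=
        IsSelfAdjoint.conjugate_le_conjugate hsandwich (hSt.add hSc).isHermitian.inv
    _ = _ := by rw [mul_smul_comm, smul_mul_assoc]
end

section
/- Let X_1,…,X_m ∈ ℝ^k with mean X̄ = (1/m)Σ X_i and S = Σ_{i=1}^m (X_i − X̄)(X_i − X̄)ᵀ invertible. For a fixed target x* ∈ ℝ^k, the unique solution of: minimize Σ_{i=1}^m (w_i − 1/m)² subject to Σ w_i = 1 and Σ w_i X_i = x*, is w_i = 1/m + (X_i − X̄)ᵀ S⁻¹ (x* − X̄). -/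
/-!
Write `u = w - 1/m` and let `D` be the centred data matrix with rows `X_i - X̄`, so `S = Dᵀ D`.
When `∑ w = 1`, the mean constraint reads `Dᵀ u = x* - X̄`, and `w* - 1/m = D S⁻¹ (x* - X̄)`
satisfies it. Any other feasible `u` differs from `D S⁻¹ (x* - X̄)` by a vector of `ker Dᵀ`,
which is orthogonal to the column space of `D`; by Pythagoras
`‖u‖² = ‖u - (w* - 1/m)‖² + ‖w* - 1/m‖²`.
-/

open Matrix Finset

namespace Matrix

variable {n p R : Type*} [CommRing R]

theorem sum_vecMulVec_self_eq_transpose_mul {ι : Type*} [Fintype ι] (Y : ι → n → R) :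
    ∑ i, vecMulVec (Y i) (Y i) = (of Y)ᵀ * of Y := by
  ext a b
  simp [mul_apply, Matrix.sum_apply, vecMulVec_apply]

variable [Fintype n] [Fintype p]

theorem dotProduct_self_eq_add_of_transpose_mulVec_eq {A : Matrix n p R} (c : p → R)
    {u : n → R} (h : Aᵀ *ᵥ u = Aᵀ *ᵥ (A *ᵥ c)) :
    u ⬝ᵥ u = (u - A *ᵥ c) ⬝ᵥ (u - A *ᵥ c) + (A *ᵥ c) ⬝ᵥ (A *ᵥ c) := by
  have horth : (u - A *ᵥ c) ⬝ᵥ (A *ᵥ c) = 0 := by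
    rw [dotProduct_mulVec, ← mulVec_transpose, mulVec_sub, h, sub_self, zero_dotProduct]
  conv_lhs => rw [← sub_add_cancel u (A *ᵥ c)]
  rw [add_dotProduct, dotProduct_add, dotProduct_add, horth, dotProduct_comm (A *ᵥ c), horth]
  ring

theorem dotProduct_self_le_of_transpose_mulVec_eq [LinearOrder R] [IsStrictOrderedRing R]
    {A : Matrix n p R} (c : p → R) {u : n → R} (h : Aᵀ *ᵥ u = Aᵀ *ᵥ (A *ᵥ c)) :
    (A *ᵥ c) ⬝ᵥ (A *ᵥ c) ≤ u ⬝ᵥ u ∧ (u ⬝ᵥ u = (A *ᵥ c) ⬝ᵥ (A *ᵥ c) → u = A *ᵥ c) := by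
  rw [dotProduct_self_eq_add_of_transpose_mulVec_eq c h]
  refine ⟨le_add_of_nonneg_left (sum_nonneg fun i _ => mul_self_nonneg _), fun heq => ?_⟩
  exact sub_eq_zero.1 (dotProduct_self_eq_zero.1 (by linarith))

end Matrix

section Mean

variable {ι K V : Type*} [Fintype ι] [Field K] [CharZero K] [AddCommGroup V] [Module K V]

theorem sum_sub_inv_card (hι : Fintype.card ι ≠ 0) (w : ι → K) :
    ∑ i, (w i - (Fintype.card ι : K)⁻¹) = ∑ i, w i - 1 := by
  rw [sum_sub_distrib, sum_const, card_univ, nsmul_eq_mul,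
    mul_inv_cancel₀ (Nat.cast_ne_zero.2 hι)]

variable {X : ι → V} {Xbar : V}

theorem sum_sub_mean_eq_zero (hι : Fintype.card ι ≠ 0)
    (hXbar : Xbar = (Fintype.card ι : K)⁻¹ • ∑ i, X i) :
    ∑ i, (X i - Xbar) = 0 := by
  rw [sum_sub_distrib, sum_const, card_univ, ← Nat.cast_smul_eq_nsmul K, hXbar, smul_smul,
    mul_inv_cancel₀ (Nat.cast_ne_zero.2 hι), one_smul, sub_self]

theorem sum_smul_sub_mean {w : ι → K} (hw : ∑ i, w i = 1) (hι : Fintype.card ι ≠ 0)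
    (hXbar : Xbar = (Fintype.card ι : K)⁻¹ • ∑ i, X i) :
    ∑ i, (w i - (Fintype.card ι : K)⁻¹) • (X i - Xbar) = ∑ i, w i • X i - Xbar := by
  rw [funext fun i => sub_smul (w i) _ (X i - Xbar), sum_sub_distrib, ← smul_sum,
    sum_sub_mean_eq_zero hι hXbar, smul_zero, sub_zero]
  simp only [smul_sub, sum_sub_distrib, ← sum_smul, hw, one_smul]

end Mean

/-- The MRI implied weights `w*_i = 1/m + (X_i − X̄)ᵀ S⁻¹ (x* − X̄)` are the unique
solution of: minimize `∑ (w_i − 1/m)²` subject to `∑ w_i = 1` and `∑ w_i X_i = x*`. -/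
theorem mri_weights_optimality {m k : ℕ} (hm : 0 < m)
    (X : Fin m → Fin k → ℝ) (xstar : Fin k → ℝ)
    (Xbar : Fin k → ℝ) (hXbar : Xbar = (m : ℝ)⁻¹ • ∑ i, X i)
    (S : Matrix (Fin k) (Fin k) ℝ)
    (hS : S = ∑ i, vecMulVec (X i - Xbar) (X i - Xbar))
    (hSinv : IsUnit S.det)
    (wstar : Fin m → ℝ)
    (hwstar : ∀ i, wstar i = (m : ℝ)⁻¹ + (X i - Xbar) ⬝ᵥ S⁻¹.mulVec (xstar - Xbar)) :
    ((∑ i, wstar i = 1) ∧ (∑ i, wstar i • X i = xstar)) ∧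
      ∀ w : Fin m → ℝ, (∑ i, w i = 1) → (∑ i, w i • X i = xstar) →
        (∑ i, (wstar i - (m : ℝ)⁻¹) ^ 2 ≤ ∑ i, (w i - (m : ℝ)⁻¹) ^ 2) ∧
        (∑ i, (w i - (m : ℝ)⁻¹) ^ 2 = ∑ i, (wstar i - (m : ℝ)⁻¹) ^ 2 → w = wstar) := by
  have hcard : Fintype.card (Fin m) ≠ 0 := by simpa using hm.ne'
  have hXbar' : Xbar = (Fintype.card (Fin m) : ℝ)⁻¹ • ∑ i, X i := by rwa [Fintype.card_fin]
  set D : Matrix (Fin m) (Fin k) ℝ := of fun i => X i - Xbar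
  set c := S⁻¹ *ᵥ (xstar - Xbar)
  set dev : (Fin m → ℝ) → Fin m → ℝ := fun w i => w i - (m : ℝ)⁻¹
  have hDc : Dᵀ *ᵥ (D *ᵥ c) = xstar - Xbar := by
    rw [mulVec_mulVec, ← sum_vecMulVec_self_eq_transpose_mul, ← hS, mulVec_mulVec,
      mul_nonsing_inv S hSinv, one_mulVec]
  have hDdev : ∀ w, ∑ i, w i = 1 → Dᵀ *ᵥ dev w = ∑ i, w i • X i - Xbar := fun w hw => by
    rw [mulVec_transpose, vecMul_eq_sum, ← sum_smul_sub_mean hw hcard hXbar', Fintype.card_fin]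
    rfl
  have hdev_wstar : dev wstar = D *ᵥ c := funext fun i => by
    simp only [dev, hwstar, add_sub_cancel_left]
    rfl
  have hw1 : ∑ i, wstar i = 1 := by
    have hsum : ∑ i, (D *ᵥ c) i = (∑ i, (X i - Xbar)) ⬝ᵥ c := (sum_dotProduct _ _ _).symm
    rw [← hdev_wstar, sum_sub_mean_eq_zero hcard hXbar', zero_dotProduct] at hsum
    have := sum_sub_inv_card hcard wstar
    rw [Fintype.card_fin] at this
    linarith
  have hw2 : ∑ i, wstar i • X i = xstar := by
    rw [← sub_left_inj (a := Xbar), ← hDdev wstar hw1, hdev_wstar, hDc]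
  refine ⟨⟨hw1, hw2⟩, fun w h1 h2 => ?_⟩
  have hsq : ∀ w, ∑ i, (w i - (m : ℝ)⁻¹) ^ 2 = dev w ⬝ᵥ dev w := fun w => by
    simp only [dotProduct, dev, sq]
  obtain ⟨hle, heq⟩ :=
    dotProduct_self_le_of_transpose_mulVec_eq c (by rw [hDdev w h1, h2, hDc] : Dᵀ *ᵥ dev w = _)
  rw [hsq, hsq, hdev_wstar]
  refine ⟨hle, fun h => funext fun i => ?_⟩
  exact sub_left_inj.1 (congrFun ((heq h).trans hdev_wstar.symm) i)
end

section
/- Let X_1,…,X_m ∈ ℝ^k, and let w̃_i ≥ 0 be base weights with Σ w̃_i = 1, and s_i > 0 scaling weights. Define X̄ˢ = (Σ s_i X_i)/(Σ s_i), X̄ᵇ = Σ w̃_i X_i, and M = Σ s_i (X_i − X̄ˢ)(X_i − X̄ˢ)ᵀ, assumed invertible. For a target x* ∈ ℝ^k, the unique solution of: minimize Σ_{i=1}^m (w_i − w̃_i)²/s_i subject to Σ w_i = 1 and Σ w_i X_i = x*, is w_i = w̃_i + s_i·(X_i − X̄ˢ)ᵀ M⁻¹ (x* − X̄ᵇ).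 -/
open Matrix Finset


private lemma sumDot' {m k : ℕ} (F : Fin m → Fin k → ℝ) (c : Fin k → ℝ) :
    (∑ i, F i) ⬝ᵥ c = ∑ i, F i ⬝ᵥ c := by
  simp only [dotProduct, Finset.sum_apply, Finset.sum_mul]
  exact Finset.sum_comm

private lemma sumMulVec' {m k : ℕ} (A : Fin m → Matrix (Fin k) (Fin k) ℝ) (c : Fin k → ℝ) :
    (∑ i, A i) *ᵥ c = ∑ i, A i *ᵥ c := by
  funext j
  simp only [Matrix.mulVec, dotProduct, Finset.sum_apply, Matrix.sum_apply,
    Finset.sum_mul]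
  exact Finset.sum_comm

/-- General quadratic program of implied weights: the weights
`w*_i = w̃_i + s_i (X_i − X̄ˢ)ᵀ M⁻¹ (x* − X̄ᵇ)` are the unique solution of
minimize `∑ (w_i − w̃_i)²/s_i` subject to `∑ w_i = 1` and `∑ w_i X_i = x*`. -/
theorem weighted_qp_solution {m k : ℕ}
    (X : Fin m → Fin k → ℝ) (xstar : Fin k → ℝ)
    (wt : Fin m → ℝ) (hwt_nonneg : ∀ i, 0 ≤ wt i) (hwt_sum : ∑ i, wt i = 1)
    (s : Fin m → ℝ) (hs : ∀ i, 0 < s i)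
    (Xbars Xbarb : Fin k → ℝ)
    (hXbars : Xbars = (∑ i, s i)⁻¹ • ∑ i, s i • X i)
    (hXbarb : Xbarb = ∑ i, wt i • X i)
    (M : Matrix (Fin k) (Fin k) ℝ)
    (hM : M = ∑ i, s i • vecMulVec (X i - Xbars) (X i - Xbars))
    (hMinv : IsUnit M.det)
    (wstar : Fin m → ℝ)
    (hwstar : ∀ i, wstar i = wt i + s i * ((X i - Xbars) ⬝ᵥ M⁻¹.mulVec (xstar - Xbarb))) :
    ((∑ i, wstar i = 1) ∧ (∑ i, wstar i • X i = xstar)) ∧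
      ∀ w : Fin m → ℝ, (∑ i, w i = 1) → (∑ i, w i • X i = xstar) →
        (∑ i, (wstar i - wt i) ^ 2 / s i ≤ ∑ i, (w i - wt i) ^ 2 / s i) ∧
        (∑ i, (w i - wt i) ^ 2 / s i = ∑ i, (wstar i - wt i) ^ 2 / s i → w = wstar) := by
  have hm : m ≠ 0 := by rintro rfl; simp at hwt_sum
  haveI : NeZero m := ⟨hm⟩
  have hssum : (0:ℝ) < ∑ i, s i :=
    Finset.sum_pos (fun i _ => hs i) Finset.univ_nonempty
  set c : Fin k → ℝ := M⁻¹.mulVec (xstar - Xbarb) with hc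
  set t : Fin m → ℝ := fun i => (X i - Xbars) ⬝ᵥ c with ht
  -- centering: ∑ s i • (X i - Xbars) = 0
  have hA : ∑ i, s i • (X i - Xbars) = 0 := by
    have h1 : ∑ i, s i • (X i - Xbars) = (∑ i, s i • X i) - (∑ i, s i) • Xbars := by
      rw [Finset.sum_smul, ← Finset.sum_sub_distrib]
      exact Finset.sum_congr rfl fun i _ => smul_sub _ _ _
    rw [h1, hXbars, smul_smul, mul_inv_cancel₀ (ne_of_gt hssum), one_smul, sub_self]
  have hB : ∑ i, s i * t i = 0 := by
    have h := congrArg (fun v => v ⬝ᵥ c) hA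
    simp only [sumDot', smul_dotProduct, smul_eq_mul, zero_dotProduct] at h
    exact h
  -- vecMulVec action
  have hvm : ∀ (u v x : Fin k → ℝ), (vecMulVec u v).mulVec x = (v ⬝ᵥ x) • u := by
    intro u v x
    funext j
    simp only [Matrix.mulVec, Matrix.vecMulVec_apply, dotProduct, Pi.smul_apply,
      smul_eq_mul, Finset.sum_mul, Finset.mul_sum]
    exact Finset.sum_congr rfl fun l _ => by ring
  have hMc : M.mulVec c = ∑ i, (s i * t i) • (X i - Xbars) := by
    rw [hM, sumMulVec']
    refine Finset.sum_congr rfl fun i _ => ?_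
    rw [Matrix.smul_mulVec, hvm, smul_smul]
  have hMcinv : M.mulVec c = xstar - Xbarb := by
    rw [hc, Matrix.mulVec_mulVec, Matrix.mul_nonsing_inv M hMinv, Matrix.one_mulVec]
  have hwstar' : ∀ i, wstar i = wt i + s i * t i := hwstar
  -- feasibility
  have hfeas1 : ∑ i, wstar i = 1 := by
    rw [Finset.sum_congr rfl fun i _ => hwstar' i, Finset.sum_add_distrib, hwt_sum, hB, add_zero]
  have h2 : ∑ i, (s i * t i) • X i = xstar - Xbarb := by
    have hsplit : ∑ i, (s i * t i) • X i
        = (∑ i, (s i * t i) • (X i - Xbars)) + (∑ i, s i * t i) • Xbars := by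
      rw [Finset.sum_smul, ← Finset.sum_add_distrib]
      refine Finset.sum_congr rfl fun i _ => ?_
      rw [← smul_add, sub_add_cancel]
    rw [hsplit, ← hMc, hMcinv, hB, zero_smul, add_zero]
  have hfeas2 : ∑ i, wstar i • X i = xstar := by
    have : ∑ i, wstar i • X i = (∑ i, wt i • X i) + ∑ i, (s i * t i) • X i := by
      rw [← Finset.sum_add_distrib]
      refine Finset.sum_congr rfl fun i _ => ?_
      rw [hwstar' i, add_smul]
    rw [this, ← hXbarb, h2, add_sub_cancel]
  refine ⟨⟨hfeas1, hfeas2⟩, ?_⟩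
  intro w hw1 hw2
  set d : Fin m → ℝ := fun i => w i - wstar i with hd
  have hd1 : ∑ i, d i = 0 := by
    simp only [hd, Finset.sum_sub_distrib, hw1, hfeas1, sub_self]
  have hd2 : ∑ i, d i • X i = 0 := by
    have : ∑ i, d i • X i = (∑ i, w i • X i) - ∑ i, wstar i • X i := by
      rw [← Finset.sum_sub_distrib]
      exact Finset.sum_congr rfl fun i _ => sub_smul _ _ _
    rw [this, hw2, hfeas2, sub_self]
  -- cross term vanishes
  have hdu : ∑ i, d i • (X i - Xbars) = 0 := by
    have : ∑ i, d i • (X i - Xbars) = (∑ i, d i • X i) - (∑ i, d i) • Xbars := by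
      rw [Finset.sum_smul, ← Finset.sum_sub_distrib]
      exact Finset.sum_congr rfl fun i _ => smul_sub _ _ _
    rw [this, hd2, hd1, zero_smul, sub_self]
  have hcross : ∑ i, d i * t i = 0 := by
    have h := congrArg (fun v => v ⬝ᵥ c) hdu
    simp only [sumDot', smul_dotProduct, smul_eq_mul, zero_dotProduct] at h
    exact h
  -- pointwise decomposition of the objective
  have hpt : ∀ i, (w i - wt i) ^ 2 / s i
      = (wstar i - wt i) ^ 2 / s i + 2 * (d i * t i) + d i ^ 2 / s i := by
    intro i
    have hsne : s i ≠ 0 := ne_of_gt (hs i)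
    have hw : w i = wt i + s i * t i + d i := by
      simp only [hd, hwstar' i]; ring
    rw [hw, hwstar' i]
    field_simp
    ring
  have hsum : ∑ i, (w i - wt i) ^ 2 / s i
      = (∑ i, (wstar i - wt i) ^ 2 / s i) + ∑ i, d i ^ 2 / s i := by
    calc ∑ i, (w i - wt i) ^ 2 / s i
        = ∑ i, ((wstar i - wt i) ^ 2 / s i + 2 * (d i * t i) + d i ^ 2 / s i) :=
          Finset.sum_congr rfl fun i _ => hpt i
      _ = (∑ i, (wstar i - wt i) ^ 2 / s i) + 2 * (∑ i, d i * t i)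
            + ∑ i, d i ^ 2 / s i := by
          rw [Finset.sum_add_distrib, Finset.sum_add_distrib, ← Finset.mul_sum]
      _ = (∑ i, (wstar i - wt i) ^ 2 / s i) + ∑ i, d i ^ 2 / s i := by
          rw [hcross, mul_zero, add_zero]
  have hnonneg : ∀ i ∈ Finset.univ, (0:ℝ) ≤ d i ^ 2 / s i :=
    fun i _ => div_nonneg (sq_nonneg _) (le_of_lt (hs i))
  constructor
  · rw [hsum]
    exact le_add_of_nonneg_right (Finset.sum_nonneg hnonneg)
  · intro heq
    have hzero : ∑ i, d i ^ 2 / s i = 0 := by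
      have := hsum.symm.trans heq
      linarith
    have hall : ∀ i ∈ Finset.univ, d i ^ 2 / s i = 0 :=
      (Finset.sum_eq_zero_iff_of_nonneg hnonneg).mp hzero
    funext i
    have := hall i (Finset.mem_univ i)
    have hd0 : d i = 0 := by
      have : d i ^ 2 = 0 := by
        have hsne : s i ≠ 0 := ne_of_gt (hs i)
        rcases div_eq_zero_iff.mp this with h | h
        · exact h
        · exact absurd h hsne
      exact pow_eq_zero_iff (by norm_num) |>.mp this
    have : w i - wstar i = 0 := hd0
    linarith
end

section
/- Verify the closed-form solution of the weighted quadratic program satisfies its constraints: with w_i = w̃_i + s_i·(X_i − X̄ˢ)ᵀ M⁻¹ (x* − X̄ᵇ) as above, one has Σ_{i=1}^m w_i = 1 and Σ_{i=1}^m w_i X_i = x*. -/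
open Matrix Finset

/-- The closed-form solution `w_i = w̃_i + s_i (X_i − X̄ˢ)ᵀ M⁻¹ (x* − X̄ᵇ)` of the
weighted quadratic program satisfies its constraints: `∑ w_i = 1` and
`∑ w_i X_i = x*`. -/
theorem weighted_qp_solution_feasible {m k : ℕ}
    (X : Fin m → Fin k → ℝ) (xstar : Fin k → ℝ)
    (wt : Fin m → ℝ) (hwt_sum : ∑ i, wt i = 1)
    (s : Fin m → ℝ) (hs : ∀ i, 0 < s i)
    (Xbars Xbarb : Fin k → ℝ)
    (hXbars : Xbars = (∑ i, s i)⁻¹ • ∑ i, s i • X i)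
    (hXbarb : Xbarb = ∑ i, wt i • X i)
    (M : Matrix (Fin k) (Fin k) ℝ)
    (hM : M = ∑ i, s i • vecMulVec (X i - Xbars) (X i - Xbars))
    (hMinv : IsUnit M.det)
    (w : Fin m → ℝ)
    (hw : ∀ i, w i = wt i + s i * ((X i - Xbars) ⬝ᵥ M⁻¹.mulVec (xstar - Xbarb))) :
    (∑ i, w i = 1) ∧ (∑ i, w i • X i = xstar) := by
  rcases Nat.eq_zero_or_pos m with hm | hm
  · subst hm; simp at hwt_sum
  have hS : (∑ i, s i) ≠ 0 := by
    have : 0 < ∑ i, s i := Finset.sum_pos (fun i _ => hs i) (by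
      simpa using Finset.univ_nonempty_iff.mpr ⟨⟨0, hm⟩⟩)
    exact ne_of_gt this
  set u := M⁻¹.mulVec (xstar - Xbarb) with hu
  set d := fun i => X i - Xbars with hd
  have hdsum : ∑ i, s i • d i = 0 := by
    have : ∑ i, s i • d i = (∑ i, s i • X i) - (∑ i, s i) • Xbars := by
      simp [hd, smul_sub, Finset.sum_sub_distrib, Finset.sum_smul]
    rw [this, hXbars, smul_smul, mul_inv_cancel₀ hS, one_smul, sub_self]
  have hdot : ∑ i, s i * (d i ⬝ᵥ u) = 0 := by
    have h : ∀ a, ∑ i, s i * d i a = 0 := fun a => by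
      simpa using congrFun hdsum a
    calc ∑ i, s i * (d i ⬝ᵥ u) = ∑ i, ∑ j, s i * d i j * u j := by
          simp [dotProduct, Finset.mul_sum, mul_assoc]
      _ = ∑ j, ∑ i, s i * d i j * u j := Finset.sum_comm
      _ = 0 := by simp [← Finset.sum_mul, h]
  have hMu : M.mulVec u = xstar - Xbarb := by
    rw [hu, Matrix.mulVec_mulVec, Matrix.mul_nonsing_inv M hMinv, Matrix.one_mulVec]
  have hMu' : ∑ i, (s i * (d i ⬝ᵥ u)) • d i = xstar - Xbarb := by
    rw [← hMu, hM]
    funext j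
    have lhs : (∑ i, (s i * (d i ⬝ᵥ u)) • d i) j
        = ∑ i, ∑ l, s i * d i j * d i l * u l := by
      simp [Finset.sum_apply, dotProduct, Finset.mul_sum, Finset.sum_mul]
      exact Finset.sum_congr rfl fun i _ => Finset.sum_congr rfl fun l _ => by ring
    have rhs : ((∑ i, s i • vecMulVec (X i - Xbars) (X i - Xbars)) *ᵥ u) j
        = ∑ l, ∑ i, s i * d i j * d i l * u l := by
      simp [Matrix.mulVec, dotProduct, Matrix.sum_apply, Matrix.vecMulVec_apply,
        Finset.sum_mul]
      exact Finset.sum_congr rfl fun l _ => Finset.sum_congr rfl fun i _ => by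
        simp only [hd, Pi.sub_apply]; ring
    rw [lhs, rhs, Finset.sum_comm]
  constructor
  · simp only [hw]
    rw [Finset.sum_add_distrib, hwt_sum, hdot, add_zero]
  · have : ∑ i, w i • X i
        = (∑ i, wt i • X i) + ∑ i, (s i * (d i ⬝ᵥ u)) • (d i + Xbars) := by
      simp only [hw, add_smul, Finset.sum_add_distrib]
      congr 1
      refine Finset.sum_congr rfl fun i _ => ?_
      simp [hd]
    rw [this, ← hXbarb]
    have h2 : ∑ i, (s i * (d i ⬝ᵥ u)) • (d i + Xbars)
        = (∑ i, (s i * (d i ⬝ᵥ u)) • d i) + (∑ i, s i * (d i ⬝ᵥ u)) • Xbars := by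
      simp [smul_add, Finset.sum_add_distrib, Finset.sum_smul]
    rw [h2, hMu', hdot, zero_smul, add_zero, add_sub_cancel]
end

section
/- The URI weights balance covariate means at a common profile: with the URI weights defined as above, Σ_{i:Z_i=1} w_i X_i = Σ_{i:Z_i=0} w_i X_i = S_c(S_t + S_c)⁻¹ X̄_t + S_t(S_t + S_c)⁻¹ X̄_c. -/
open Matrix Finset

lemma dot_sum_left {k : ℕ} {ι : Type*} (s : Finset ι) (u : ι → Fin k → ℝ)
    (y : Fin k → ℝ) : (∑ i ∈ s, u i) ⬝ᵥ y = ∑ i ∈ s, (u i ⬝ᵥ y) := by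
  simp only [dotProduct, Finset.sum_apply, Finset.sum_mul]
  rw [Finset.sum_comm]

lemma sum_dot_smul {k : ℕ} {ι : Type*} (s : Finset ι) (u : ι → Fin k → ℝ)
    (y : Fin k → ℝ) :
    ∑ i ∈ s, (u i ⬝ᵥ y) • u i = (∑ i ∈ s, vecMulVec (u i) (u i)).mulVec y := by
  funext j
  simp only [Finset.sum_apply, Pi.smul_apply, smul_eq_mul, mulVec, dotProduct,
    vecMulVec_apply, Matrix.sum_apply, Finset.sum_mul, Finset.mul_sum]
  rw [Finset.sum_comm]
  exact Finset.sum_congr rfl fun i _ => Finset.sum_congr rfl fun l _ => by ring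

lemma key {k : ℕ} {ι : Type*} (s : Finset ι) (m : ℕ) (hm : 0 < m)
    (X : ι → Fin k → ℝ) (μ : Fin k → ℝ) (hμ : μ = (m:ℝ)⁻¹ • ∑ i ∈ s, X i)
    (hcard : m = s.card)
    (S : Matrix (Fin k) (Fin k) ℝ) (hS : S = ∑ i ∈ s, vecMulVec (X i - μ) (X i - μ))
    (y : Fin k → ℝ) (c : ℝ) (w : ι → ℝ)
    (hw : ∀ i ∈ s, w i = (m:ℝ)⁻¹ + c * ((X i - μ) ⬝ᵥ y)) :
    ∑ i ∈ s, w i • X i = μ + c • S.mulVec y := by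
  have hm' : (m:ℝ) ≠ 0 := Nat.cast_ne_zero.mpr hm.ne'
  have hsum : ∑ i ∈ s, X i = (m:ℝ) • μ := by
    rw [hμ, smul_smul, mul_inv_cancel₀ hm', one_smul]
  have hzero : ∑ i ∈ s, (X i - μ) = 0 := by
    rw [Finset.sum_sub_distrib, Finset.sum_const, hsum, ← hcard,
      ← Nat.cast_smul_eq_nsmul ℝ, sub_self]
  calc ∑ i ∈ s, w i • X i
      = ∑ i ∈ s, ((m:ℝ)⁻¹ • X i + ((c * ((X i - μ) ⬝ᵥ y)) • (X i - μ)
          + (c * ((X i - μ) ⬝ᵥ y)) • μ)) := by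
        refine Finset.sum_congr rfl fun i hi => ?_
        rw [hw i hi, add_smul, ← smul_add, sub_add_cancel]
    _ = (m:ℝ)⁻¹ • ∑ i ∈ s, X i
        + (c • ∑ i ∈ s, ((X i - μ) ⬝ᵥ y) • (X i - μ)
          + (c * ((∑ i ∈ s, (X i - μ)) ⬝ᵥ y)) • μ) := by
        rw [Finset.sum_add_distrib, Finset.sum_add_distrib, Finset.smul_sum,
          Finset.smul_sum, dot_sum_left, Finset.mul_sum, Finset.sum_smul]
        congr 1
        congr 1
        exact Finset.sum_congr rfl fun i _ => (mul_smul _ _ _)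
    _ = μ + c • S.mulVec y := by
        rw [hzero, zero_dotProduct, mul_zero, zero_smul, add_zero, hsum,
          smul_smul, inv_mul_cancel₀ hm', one_smul, sum_dot_smul, hS]

/-- The URI implied weights balance the covariate means of both groups at the common
profile `S_c (S_t + S_c)⁻¹ X̄_t + S_t (S_t + S_c)⁻¹ X̄_c`. -/
theorem uri_weights_balance {n k : ℕ}
    (X : Fin n → Fin k → ℝ) (Z : Fin n → Bool)
    (T C : Finset (Fin n))
    (hT : T = Finset.univ.filter fun i => Z i = true)
    (hC : C = Finset.univ.filter fun i => Z i = false)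
    (nt nc : ℕ) (hnt : nt = T.card) (hnc : nc = C.card)
    (hntpos : 0 < nt) (hncpos : 0 < nc)
    (Xbar_t Xbar_c Xbar : Fin k → ℝ)
    (hXt : Xbar_t = (nt : ℝ)⁻¹ • ∑ i ∈ T, X i)
    (hXc : Xbar_c = (nc : ℝ)⁻¹ • ∑ i ∈ C, X i)
    (hX : Xbar = (n : ℝ)⁻¹ • ((nt : ℝ) • Xbar_t + (nc : ℝ) • Xbar_c))
    (St Sc : Matrix (Fin k) (Fin k) ℝ)
    (hSt : St = ∑ i ∈ T, vecMulVec (X i - Xbar_t) (X i - Xbar_t))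
    (hSc : Sc = ∑ i ∈ C, vecMulVec (X i - Xbar_c) (X i - Xbar_c))
    (hinv : IsUnit (St + Sc).det)
    (w : Fin n → ℝ)
    (hwT : ∀ i ∈ T, w i = (nt : ℝ)⁻¹ +
      (n : ℝ) / nc * ((X i - Xbar_t) ⬝ᵥ (St + Sc)⁻¹.mulVec (Xbar - Xbar_t)))
    (hwC : ∀ i ∈ C, w i = (nc : ℝ)⁻¹ +
      (n : ℝ) / nt * ((X i - Xbar_c) ⬝ᵥ (St + Sc)⁻¹.mulVec (Xbar - Xbar_c))) :
    (∑ i ∈ T, w i • X i =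
      (Sc * (St + Sc)⁻¹).mulVec Xbar_t + (St * (St + Sc)⁻¹).mulVec Xbar_c) ∧
    (∑ i ∈ C, w i • X i =
      (Sc * (St + Sc)⁻¹).mulVec Xbar_t + (St * (St + Sc)⁻¹).mulVec Xbar_c) := by
  set M := (St + Sc)⁻¹ with hM
  have hcards : nt + nc = n := by
    rw [hnt, hnc, hT, hC]
    have : (Finset.univ.filter fun i => Z i = false)
        = (Finset.univ.filter fun i : Fin n => ¬ (Z i = true)) := by
      simp [Bool.not_eq_true]
    rw [this, Finset.card_filter_add_card_filter_not, Finset.card_univ,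
      Fintype.card_fin]
  have hnR : (n : ℝ) = (nt : ℝ) + nc := by exact_mod_cast hcards.symm
  have hnt' : (nt : ℝ) ≠ 0 := Nat.cast_ne_zero.mpr hntpos.ne'
  have hnc' : (nc : ℝ) ≠ 0 := Nat.cast_ne_zero.mpr hncpos.ne'
  have hn' : (n : ℝ) ≠ 0 := by rw [hnR]; positivity
  have hone : (St + Sc) * M = 1 := Matrix.mul_nonsing_inv _ hinv
  have hdT : Xbar - Xbar_t = ((nc : ℝ) / n) • (Xbar_c - Xbar_t) := by
    funext j
    simp only [hX, Pi.sub_apply, Pi.smul_apply, Pi.add_apply, smul_eq_mul]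
    field_simp
    linear_combination (- Xbar_t j) * hnR
  have hdC : Xbar - Xbar_c = ((nt : ℝ) / n) • (Xbar_t - Xbar_c) := by
    funext j
    simp only [hX, Pi.sub_apply, Pi.smul_apply, Pi.add_apply, smul_eq_mul]
    field_simp
    linear_combination (- Xbar_c j) * hnR
  have hTbal : ∑ i ∈ T, w i • X i = Xbar_t + (St * M).mulVec (Xbar_c - Xbar_t) := by
    rw [key T nt hntpos X Xbar_t hXt hnt St hSt (M.mulVec (Xbar - Xbar_t))
      ((n : ℝ) / nc) w hwT, hdT, Matrix.mulVec_smul, Matrix.mulVec_smul, smul_smul,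
      div_mul_div_comm, mul_comm (n : ℝ) (nc : ℝ), div_self (by positivity), one_smul,
      Matrix.mulVec_mulVec]
  have hCbal : ∑ i ∈ C, w i • X i = Xbar_c + (Sc * M).mulVec (Xbar_t - Xbar_c) := by
    rw [key C nc hncpos X Xbar_c hXc hnc Sc hSc (M.mulVec (Xbar - Xbar_c))
      ((n : ℝ) / nt) w hwC, hdC, Matrix.mulVec_smul, Matrix.mulVec_smul, smul_smul,
      div_mul_div_comm, mul_comm (n : ℝ) (nt : ℝ), div_self (by positivity), one_smul,
      Matrix.mulVec_mulVec]
  have hScM : Sc * M = 1 - St * M := by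
    rw [eq_sub_iff_add_eq, ← add_mul, add_comm Sc St, hone]
  have hStM : St * M = 1 - Sc * M := by
    rw [eq_sub_iff_add_eq, ← add_mul, add_comm St Sc, add_comm Sc St, hone]
  constructor
  · rw [hTbal, hScM, Matrix.sub_mulVec, Matrix.one_mulVec, Matrix.mulVec_sub]
    abel
  · rw [hCbal, hStM, Matrix.sub_mulVec, Matrix.one_mulVec, Matrix.mulVec_sub]
    abel
end

section
/- The URI weights equal the MRI weights evaluated at the profile x* = S_c(S_t + S_c)⁻¹ X̄_t + S_t(S_t + S_c)⁻¹ X̄_c: for every treated unit i, 1/n_t + (n/n_c)(X_i − X̄_t)ᵀ(S_t + S_c)⁻¹(X̄ − X̄_t) = 1/n_t + (X_i − X̄_t)ᵀ S_t⁻¹ (x* − X̄_t). -/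
open Matrix

/-- The URI weight of a treated unit equals the MRI weight evaluated at the profile
`x* = S_c (S_t + S_c)⁻¹ X̄_t + S_t (S_t + S_c)⁻¹ X̄_c`:
`1/n_t + (n/n_c)(X_i − X̄_t)ᵀ(S_t + S_c)⁻¹(X̄ − X̄_t)
  = 1/n_t + (X_i − X̄_t)ᵀ S_t⁻¹ (x* − X̄_t)`. -/
theorem uri_eq_mri_at_profile {k : ℕ}
    (St Sc : Matrix (Fin k) (Fin k) ℝ) (hSt : St.PosDef) (hSc : Sc.PosDef)
    (nt nc n : ℝ) (hnt : 0 < nt) (hnc : 0 < nc) (hn : n = nt + nc)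
    (Xbar_t Xbar_c Xbar xstar : Fin k → ℝ)
    (hX : Xbar = n⁻¹ • (nt • Xbar_t + nc • Xbar_c))
    (hxstar : xstar = (Sc * (St + Sc)⁻¹).mulVec Xbar_t + (St * (St + Sc)⁻¹).mulVec Xbar_c) :
    ∀ Xi : Fin k → ℝ,
      nt⁻¹ + n / nc * ((Xi - Xbar_t) ⬝ᵥ (St + Sc)⁻¹.mulVec (Xbar - Xbar_t)) =
      nt⁻¹ + (Xi - Xbar_t) ⬝ᵥ St⁻¹.mulVec (xstar - Xbar_t) := by
  intro Xi
  have hn0 : n ≠ 0 := by rw [hn]; positivity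
  have hA : (St + Sc).PosDef := hSt.add hSc
  have hAdet : IsUnit (St + Sc).det := hA.det_pos.ne'.isUnit
  have hStdet : IsUnit St.det := hSt.det_pos.ne'.isUnit
  have hsum : Sc * (St + Sc)⁻¹ + St * (St + Sc)⁻¹ = 1 := by
    rw [← add_mul, add_comm Sc St]; exact mul_nonsing_inv _ hAdet
  -- xstar - Xbar_t = (St * (St+Sc)⁻¹) (Xbar_c - Xbar_t)
  have h1 : xstar - Xbar_t = (St * (St + Sc)⁻¹).mulVec (Xbar_c - Xbar_t) := by
    have hXt : (Sc * (St + Sc)⁻¹).mulVec Xbar_t + (St * (St + Sc)⁻¹).mulVec Xbar_t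
        = Xbar_t := by
      rw [← add_mulVec, hsum, one_mulVec]
    rw [hxstar, mulVec_sub]
    funext i
    have := congrFun hXt i
    simp only [Pi.add_apply, Pi.sub_apply] at *
    linarith
  have h2 : St⁻¹.mulVec (xstar - Xbar_t) = (St + Sc)⁻¹.mulVec (Xbar_c - Xbar_t) := by
    rw [h1, mulVec_mulVec, ← Matrix.mul_assoc, nonsing_inv_mul _ hStdet, Matrix.one_mul]
  have h3 : Xbar - Xbar_t = (nc / n) • (Xbar_c - Xbar_t) := by
    rw [hX]
    funext i
    simp only [Pi.sub_apply, Pi.smul_apply, Pi.add_apply, smul_eq_mul]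
    field_simp
    rw [hn]; ring
  rw [h2, h3, mulVec_smul, dotProduct_smul, smul_eq_mul, ← mul_assoc]
  have : n / nc * (nc / n) = 1 := by field_simp
  rw [this, one_mul]
end

section
/- The variance of the URI weights in the treatment group equals (1/n_t)·(n/n_c)²·(X̄ − X̄_t)ᵀ(S_t + S_c)⁻¹ S_t (S_t + S_c)⁻¹ (X̄ − X̄_t), i.e., (1/n_t)·Σ_{i:Z_i=1}(w_i^URI − 1/n_t)² equals this expression. -/
open Matrix Finset

lemma vecMulVec_mulVec' {k : ℕ} (v x : Fin k → ℝ) :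
    (vecMulVec v v).mulVec x = (v ⬝ᵥ x) • v := by
  ext i
  simp [vecMulVec, mulVec, dotProduct, Finset.mul_sum, mul_assoc, mul_comm, mul_left_comm]

/-- The variance of the URI weights in the treatment group equals
`(1/n_t)(n/n_c)² (X̄ − X̄_t)ᵀ (S_t + S_c)⁻¹ S_t (S_t + S_c)⁻¹ (X̄ − X̄_t)`. -/
theorem uri_weights_variance_treated {n k : ℕ}
    (X : Fin n → Fin k → ℝ) (Z : Fin n → Bool)
    (T C : Finset (Fin n))
    (hT : T = Finset.univ.filter fun i => Z i = true)
    (hC : C = Finset.univ.filter fun i => Z i = false)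
    (nt nc : ℕ) (hnt : nt = T.card) (hnc : nc = C.card)
    (hntpos : 0 < nt) (hncpos : 0 < nc)
    (Xbar_t Xbar_c Xbar : Fin k → ℝ)
    (hXt : Xbar_t = (nt : ℝ)⁻¹ • ∑ i ∈ T, X i)
    (hXc : Xbar_c = (nc : ℝ)⁻¹ • ∑ i ∈ C, X i)
    (hX : Xbar = (n : ℝ)⁻¹ • ((nt : ℝ) • Xbar_t + (nc : ℝ) • Xbar_c))
    (St Sc : Matrix (Fin k) (Fin k) ℝ)
    (hSt : St = ∑ i ∈ T, vecMulVec (X i - Xbar_t) (X i - Xbar_t))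
    (hSc : Sc = ∑ i ∈ C, vecMulVec (X i - Xbar_c) (X i - Xbar_c))
    (hinv : IsUnit (St + Sc).det)
    (w : Fin n → ℝ)
    (hwT : ∀ i ∈ T, w i = (nt : ℝ)⁻¹ +
      (n : ℝ) / nc * ((X i - Xbar_t) ⬝ᵥ (St + Sc)⁻¹.mulVec (Xbar - Xbar_t))) :
    (nt : ℝ)⁻¹ * ∑ i ∈ T, (w i - (nt : ℝ)⁻¹) ^ 2 =
      (nt : ℝ)⁻¹ * ((n : ℝ) / nc) ^ 2 *
        ((Xbar - Xbar_t) ⬝ᵥ ((St + Sc)⁻¹ * St * (St + Sc)⁻¹).mulVec (Xbar - Xbar_t)) := by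
  set A := (St + Sc)⁻¹ with hA
  set u := Xbar - Xbar_t with hu
  set x := A.mulVec u with hx
  have hsymm : (St + Sc)ᵀ = St + Sc := by
    rw [hSt, hSc, transpose_add, Matrix.transpose_sum, Matrix.transpose_sum]
    congr 1 <;> exact Finset.sum_congr rfl fun i _ => by
      ext a b; simp [vecMulVec, mul_comm]
  have hAsymm : Aᵀ = A := by rw [hA, transpose_nonsing_inv, hsymm]
  have hsum : ∑ i ∈ T, (w i - (nt : ℝ)⁻¹) ^ 2
      = ((n : ℝ) / nc) ^ 2 * (x ⬝ᵥ St.mulVec x) := by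
    have : ∀ i ∈ T, (w i - (nt : ℝ)⁻¹) ^ 2
        = ((n : ℝ) / nc) ^ 2 * (x ⬝ᵥ (vecMulVec (X i - Xbar_t) (X i - Xbar_t)).mulVec x) := by
      intro i hi
      rw [hwT i hi, vecMulVec_mulVec', dotProduct_smul]
      have : x ⬝ᵥ (X i - Xbar_t) = (X i - Xbar_t) ⬝ᵥ x := dotProduct_comm _ _
      rw [add_sub_cancel_left, mul_pow, smul_eq_mul, this]
      ring
    rw [Finset.sum_congr rfl this, ← Finset.mul_sum]
    congr 1
    have hmv : (∑ i ∈ T, vecMulVec (X i - Xbar_t) (X i - Xbar_t)) *ᵥ x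
        = ∑ i ∈ T, vecMulVec (X i - Xbar_t) (X i - Xbar_t) *ᵥ x := by
      ext j
      simp [mulVec, dotProduct, Matrix.sum_apply, Finset.sum_apply, Finset.sum_mul]
      rw [Finset.sum_comm]
    rw [hSt, hmv]
    simp only [dotProduct, Finset.sum_apply, Finset.mul_sum]
    exact Finset.sum_comm
  rw [hsum]
  have hrhs : u ⬝ᵥ (A * St * A).mulVec u = x ⬝ᵥ St.mulVec x := by
    have huA : u ᵥ* A = x := by rw [← hAsymm, vecMul_transpose, ← hx]
    rw [← mulVec_mulVec, ← mulVec_mulVec, dotProduct_mulVec, huA]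
  rw [hrhs]; ring
end

section
/- Suppose the propensity score is linear: e(x) = a₀ + a₁ᵀx with e(X) = P(Z=1|X). Let p = P(Z=1) ∈ (0,1), μ = E(X), μ_t = E(X|Z=1), μ_c = E(X|Z=0), A = p·Var(X|Z=1) + (1−p)·Var(X|Z=0) invertible, c = (μ_t − μ_c)ᵀA⁻¹(μ_t − μ_c). Then a₁ = [p(1−p)/(1 + p(1−p)c)]·A⁻¹(μ_t − μ_c) and a₀ = p − a₁ᵀμ. -/
/-!
Read `e` and `1 - e` as soft assignments of the population to the treated and control groups.
The law of total covariance then splits `Var X = A + p(1-p) d dᵀ` with `d = μ_t - μ_c`, while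
linearity of `e` gives `Var X · a₁ = Cov(X, e) = p(1-p) d`. So `(A + p(1-p) d dᵀ) a₁ = p(1-p) d`,
which the Sherman–Morrison formula solves for `a₁`; taking expectations in `e = a₀ + a₁ᵀX`
gives `a₀`.
-/

open MeasureTheory Matrix
open scoped ENNReal ProbabilityTheory

namespace Matrix

variable {n K : Type*} [Fintype n] [DecidableEq n] [Field K]

theorem eq_smul_inv_mulVec_of_add_smul_vecMulVec_mulVec_eq {A : Matrix n n K}
    (hA : IsUnit A.det) {d x : n → K} {q : K} (h : (A + q • vecMulVec d d) *ᵥ x = q • d) :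
    x = (q / (1 + q * (d ⬝ᵥ A⁻¹ *ᵥ d))) • A⁻¹ *ᵥ d := by
  set c := d ⬝ᵥ A⁻¹ *ᵥ d
  set s := d ⬝ᵥ x
  have hAx : A *ᵥ x = (q * (1 - s)) • d := by
    rw [add_mulVec, smul_mulVec, vecMulVec_mulVec, op_smul_eq_smul, smul_smul] at h
    rw [mul_sub, mul_one, sub_smul, ← h, add_sub_cancel_right]
  have hx : x = (q * (1 - s)) • A⁻¹ *ᵥ d := by
    rw [← mulVec_smul, ← hAx, mulVec_mulVec, nonsing_inv_mul _ hA, one_mulVec]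
  have hs : s = q * (1 - s) * c := by
    simp only [s, c]
    conv_lhs => rw [hx]
    rw [dotProduct_smul, smul_eq_mul]
  have hsc : (1 - s) * (1 + q * c) = 1 := by linear_combination -hs
  rw [hx]
  congr 1
  rw [eq_div_iff (right_ne_zero_of_mul_eq_one hsc)]
  linear_combination q * hsc

end Matrix

namespace ProbabilityTheory

variable {Ω ι : Type*} [MeasurableSpace Ω] [Fintype ι]

noncomputable def covMatrix (X : Ω → ι → ℝ) (μ : Measure Ω) : Matrix ι ι ℝ :=
  of fun i j => cov[fun ω => X ω i, fun ω => X ω j; μ]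

/-- For the weight `w = P(Z = 1 | ·)` this is `E(X | Z = 1)`, and `weightedCovMatrix w X μ` below
is `Var(X | Z = 1)`. -/
noncomputable def weightedMean (w : Ω → ℝ) (X : Ω → ι → ℝ) (μ : Measure Ω) : ι → ℝ :=
  (∫ ω, w ω ∂μ)⁻¹ • ∫ ω, w ω • X ω ∂μ

noncomputable def weightedCovMatrix (w : Ω → ℝ) (X : Ω → ι → ℝ) (μ : Measure Ω) :
    Matrix ι ι ℝ :=
  of fun i j => (∫ ω, w ω ∂μ)⁻¹ *
    ∫ ω, w ω * ((X ω i - weightedMean w X μ i) * (X ω j - weightedMean w X μ j)) ∂μ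

variable {μ : Measure Ω} {X : Ω → ι → ℝ} {w : Ω → ℝ}

theorem integrable_mul_apply [IsFiniteMeasure μ] (hw : MemLp w ∞ μ) (hX : MemLp X 2 μ)
    (i : ι) : Integrable (fun ω => w ω * X ω i) μ :=
  ((hX.eval i).mul' (r := 2) hw).integrable one_le_two

theorem integrable_mul_apply_mul_apply (hw : MemLp w ∞ μ) (hX : MemLp X 2 μ) (i j : ι) :
    Integrable (fun ω => w ω * (X ω i * X ω j)) μ :=
  (memLp_one_iff_integrable.2 ((hX.eval i).integrable_mul (hX.eval j))).mul' (r := 1) hw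
    |> memLp_one_iff_integrable.1

theorem memLp_top_one_sub (hw : MemLp w ∞ μ) : MemLp (fun ω => 1 - w ω) ∞ μ :=
  (memLp_top_const 1).sub hw

theorem memLp_top_of_nonneg_of_le_one (hw : AEStronglyMeasurable w μ)
    (hw01 : ∀ ω, 0 ≤ w ω ∧ w ω ≤ 1) : MemLp w ∞ μ :=
  memLp_top_of_bound hw 1 (ae_of_all _ fun ω => abs_le.2 ⟨by linarith [hw01 ω], (hw01 ω).2⟩)

theorem integral_one_sub [IsProbabilityMeasure μ] (hw : MemLp w ∞ μ) :
    ∫ ω, (1 - w ω) ∂μ = 1 - ∫ ω, w ω ∂μ := by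
  rw [integral_sub (integrable_const 1) (hw.integrable le_top), integral_const, probReal_univ,
    one_smul]

theorem integral_one_sub_ne_zero [IsProbabilityMeasure μ] (hw : MemLp w ∞ μ)
    (hw1 : ∫ ω, w ω ∂μ ≠ 1) : ∫ ω, (1 - w ω) ∂μ ≠ 0 := by
  rw [integral_one_sub hw]
  exact sub_ne_zero.2 hw1.symm

theorem integral_mul_apply_eq_mul_weightedMean [IsFiniteMeasure μ] (hw : MemLp w ∞ μ)
    (hX : MemLp X 2 μ) (hw0 : ∫ ω, w ω ∂μ ≠ 0) (i : ι) :
    ∫ ω, w ω * X ω i ∂μ = (∫ ω, w ω ∂μ) * weightedMean w X μ i := by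
  rw [weightedMean, Pi.smul_apply, smul_eq_mul, mul_inv_cancel_left₀ hw0,
    eval_integral (f := fun ω => w ω • X ω) (integrable_mul_apply hw hX)]
  rfl

theorem mul_weightedCovMatrix_apply [IsFiniteMeasure μ] (hw : MemLp w ∞ μ) (hX : MemLp X 2 μ)
    (hw0 : ∫ ω, w ω ∂μ ≠ 0) (i j : ι) :
    (∫ ω, w ω ∂μ) * weightedCovMatrix w X μ i j =
      ∫ ω, w ω * (X ω i * X ω j) ∂μ -
        (∫ ω, w ω ∂μ) * (weightedMean w X μ i * weightedMean w X μ j) := by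
  set m := weightedMean w X μ
  have expand : (fun ω => w ω * ((X ω i - m i) * (X ω j - m j))) = fun ω =>
      w ω * (X ω i * X ω j) - m j * (w ω * X ω i) - m i * (w ω * X ω j) + m i * m j * w ω := by
    ext; ring
  have hwXX := integrable_mul_apply_mul_apply hw hX i j
  have hwXi := (integrable_mul_apply hw hX i).const_mul (m j)
  have hwXj := (integrable_mul_apply hw hX j).const_mul (m i)
  rw [weightedCovMatrix, of_apply, mul_inv_cancel_left₀ hw0, expand,
    integral_add (by fun_prop) ((hw.integrable le_top).const_mul _),
    integral_sub (by fun_prop) hwXj, integral_sub hwXX hwXi,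
    integral_const_mul, integral_const_mul, integral_const_mul,
    integral_mul_apply_eq_mul_weightedMean hw hX hw0,
    integral_mul_apply_eq_mul_weightedMean hw hX hw0]
  ring

theorem integral_apply_eq_add_weightedMean [IsProbabilityMeasure μ] (hw : MemLp w ∞ μ)
    (hX : MemLp X 2 μ) (hw0 : ∫ ω, w ω ∂μ ≠ 0) (hw1 : ∫ ω, w ω ∂μ ≠ 1) (i : ι) :
    ∫ ω, X ω i ∂μ = (∫ ω, w ω ∂μ) * weightedMean w X μ i +
      (1 - ∫ ω, w ω ∂μ) * weightedMean (fun ω => 1 - w ω) X μ i := by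
  have h1w := memLp_top_one_sub hw
  rw [← integral_mul_apply_eq_mul_weightedMean hw hX hw0, ← integral_one_sub hw,
    ← integral_mul_apply_eq_mul_weightedMean h1w hX (integral_one_sub_ne_zero hw hw1),
    ← integral_add (integrable_mul_apply hw hX i) (integrable_mul_apply h1w hX i)]
  congr 1 with ω
  ring

/-- The law of total covariance for the soft split of the population into `w` and `1 - w`. -/
theorem covMatrix_eq_add_smul_vecMulVec [IsProbabilityMeasure μ] (hw : MemLp w ∞ μ)
    (hX : MemLp X 2 μ) (hw0 : ∫ ω, w ω ∂μ ≠ 0) (hw1 : ∫ ω, w ω ∂μ ≠ 1) :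
    covMatrix X μ = (∫ ω, w ω ∂μ) • weightedCovMatrix w X μ +
      (1 - ∫ ω, w ω ∂μ) • weightedCovMatrix (fun ω => 1 - w ω) X μ +
      ((∫ ω, w ω ∂μ) * (1 - ∫ ω, w ω ∂μ)) •
        vecMulVec (weightedMean w X μ - weightedMean (fun ω => 1 - w ω) X μ)
          (weightedMean w X μ - weightedMean (fun ω => 1 - w ω) X μ) := by
  ext i j
  have h1w := memLp_top_one_sub hw
  have hsplit : ∫ ω, X ω i * X ω j ∂μ =
      ∫ ω, w ω * (X ω i * X ω j) ∂μ + ∫ ω, (1 - w ω) * (X ω i * X ω j) ∂μ := by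
    rw [← integral_add (integrable_mul_apply_mul_apply hw hX i j)
      (integrable_mul_apply_mul_apply h1w hX i j)]
    congr 1 with ω
    ring
  have hwCov := mul_weightedCovMatrix_apply hw hX hw0 i j
  have h1wCov := mul_weightedCovMatrix_apply h1w hX (integral_one_sub_ne_zero hw hw1) i j
  rw [integral_one_sub hw] at h1wCov
  simp only [covMatrix, of_apply, Matrix.add_apply, Matrix.smul_apply, smul_eq_mul,
    vecMulVec_apply, Pi.sub_apply, covariance_eq_sub (hX.eval i) (hX.eval j), Pi.mul_apply,
    integral_apply_eq_add_weightedMean hw hX hw0 hw1]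
  linear_combination hsplit - hwCov - h1wCov

theorem covariance_apply_weight [IsProbabilityMeasure μ] (hw : MemLp w ∞ μ)
    (hX : MemLp X 2 μ) (hw0 : ∫ ω, w ω ∂μ ≠ 0) (hw1 : ∫ ω, w ω ∂μ ≠ 1) (i : ι) :
    cov[fun ω => X ω i, w; μ] = ((∫ ω, w ω ∂μ) * (1 - ∫ ω, w ω ∂μ)) *
      (weightedMean w X μ i - weightedMean (fun ω => 1 - w ω) X μ i) := by
  have hwXi := integral_mul_apply_eq_mul_weightedMean hw hX hw0 i
  rw [covariance_eq_sub (hX.eval i) (hw.mono_exponent le_top),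
    integral_apply_eq_add_weightedMean hw hX hw0 hw1]
  simp only [Pi.mul_apply, mul_comm (X _ i), hwXi]
  ring

theorem covMatrix_mulVec_apply [IsProbabilityMeasure μ] (hX : MemLp X 2 μ) (a₀ : ℝ) (a : ι → ℝ)
    (i : ι) : (covMatrix X μ *ᵥ a) i = cov[fun ω => X ω i, fun ω => a₀ + a ⬝ᵥ X ω; μ] := by
  have haX : ∀ j, MemLp (fun ω => a j * X ω j) 2 μ := fun j => (hX.eval j).const_mul (a j)
  simp only [mulVec, dotProduct, covMatrix, of_apply]
  rw [covariance_const_add_right (integrable_finsetSum _ fun j _ => (haX j).integrable one_le_two),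
    covariance_fun_sum_right haX (hX.eval i)]
  simp only [covariance_const_mul_right]
  exact Finset.sum_congr rfl fun j _ => mul_comm _ _

theorem integral_const_add_dotProduct [IsProbabilityMeasure μ] (hX : Integrable X μ)
    (a₀ : ℝ) (a : ι → ℝ) : ∫ ω, (a₀ + a ⬝ᵥ X ω) ∂μ = a₀ + a ⬝ᵥ ∫ ω, X ω ∂μ := by
  have haX : ∀ j ∈ Finset.univ, Integrable (fun ω => a j * X ω j) μ :=
    fun j _ => (hX.eval j).const_mul (a j)
  simp only [dotProduct]
  rw [integral_add (integrable_const _) (integrable_finsetSum _ haX), integral_const,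
    probReal_univ, one_smul, integral_finsetSum _ haX]
  simp only [integral_const_mul, eval_integral hX.eval]

end ProbabilityTheory

open ProbabilityTheory

theorem linear_propensity_coefficients_general {k : ℕ}
    {Ω : Type*} [MeasurableSpace Ω] (μ : Measure Ω) [IsProbabilityMeasure μ]
    (X : Ω → Fin k → ℝ) (hX2 : MemLp X 2 μ)
    (a0 : ℝ) (a1 : Fin k → ℝ)
    (e : Ω → ℝ) (he : ∀ ω, e ω = a0 + a1 ⬝ᵥ X ω)
    (he01 : ∀ ω, 0 ≤ e ω ∧ e ω ≤ 1)
    (p : ℝ) (hp : p = ∫ ω, e ω ∂μ) (hp0 : 0 < p) (hp1 : p < 1)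
    (μt μc μall : Fin k → ℝ)
    (hμt : μt = p⁻¹ • ∫ ω, e ω • X ω ∂μ)
    (hμc : μc = (1 - p)⁻¹ • ∫ ω, (1 - e ω) • X ω ∂μ)
    (hμall : μall = ∫ ω, X ω ∂μ)
    (Sigt Sigc A : Matrix (Fin k) (Fin k) ℝ)
    (hSigt : ∀ i j, Sigt i j = p⁻¹ * ∫ ω, e ω * ((X ω i - μt i) * (X ω j - μt j)) ∂μ)
    (hSigc : ∀ i j, Sigc i j =
      (1 - p)⁻¹ * ∫ ω, (1 - e ω) * ((X ω i - μc i) * (X ω j - μc j)) ∂μ)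
    (hA : A = p • Sigt + (1 - p) • Sigc) (hApd : A.PosDef)
    (c : ℝ) (hc : c = (μt - μc) ⬝ᵥ A⁻¹.mulVec (μt - μc)) :
    a1 = (p * (1 - p) / (1 + p * (1 - p) * c)) • A⁻¹.mulVec (μt - μc) ∧
    a0 = p - a1 ⬝ᵥ μall := by
  have he_eq : e = fun ω => a0 + a1 ⬝ᵥ X ω := funext he
  have hw : MemLp e ∞ μ := by
    refine memLp_top_of_nonneg_of_le_one ?_ he01
    rw [he_eq]
    exact (continuous_const.add (continuous_const.dotProduct continuous_id))
      |>.comp_aestronglyMeasurable hX2.1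
  have hw0 : ∫ ω, e ω ∂μ ≠ 0 := hp ▸ hp0.ne'
  have hw1 : ∫ ω, e ω ∂μ ≠ 1 := hp ▸ hp1.ne
  have hμt' : μt = weightedMean e X μ := by rw [hμt, weightedMean, ← hp]
  have hμc' : μc = weightedMean (fun ω => 1 - e ω) X μ := by
    rw [hμc, weightedMean, integral_one_sub hw, ← hp]
  have hA' : A = p • weightedCovMatrix e X μ +
      (1 - p) • weightedCovMatrix (fun ω => 1 - e ω) X μ := by
    rw [hA]
    congr 2 <;> ext i j
    · rw [hSigt, weightedCovMatrix, of_apply, ← hp, ← hμt']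
    · rw [hSigc, weightedCovMatrix, of_apply, integral_one_sub hw, ← hp, ← hμc']
  have hcov : covMatrix X μ = A + (p * (1 - p)) • vecMulVec (μt - μc) (μt - μc) := by
    rw [covMatrix_eq_add_smul_vecMulVec hw hX2 hw0 hw1, ← hp, hA', hμt', hμc']
  have hcov_a1 : covMatrix X μ *ᵥ a1 = (p * (1 - p)) • (μt - μc) := by
    ext i
    rw [covMatrix_mulVec_apply hX2 a0 a1, ← he_eq, covariance_apply_weight hw hX2 hw0 hw1, ← hp,
      hμt', hμc']
    rfl
  constructor
  · rw [hc]
    exact eq_smul_inv_mulVec_of_add_smul_vecMulVec_mulVec_eq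
      ((isUnit_iff_isUnit_det A).1 hApd.isUnit) (hcov ▸ hcov_a1)
  · rw [hp, he_eq, integral_const_add_dotProduct (hX2.integrable one_le_two), hμall]
    ring

/-- If the propensity score is linear, `e(x) = a₀ + a₁ᵀx`, then its coefficients are
determined by the moments of `X`: `a₁ = [p(1−p)/(1 + p(1−p)c)] A⁻¹ (μ_t − μ_c)` and
`a₀ = p − a₁ᵀ μ`, where `A = p Var(X|Z=1) + (1−p) Var(X|Z=0)` and
`c = (μ_t − μ_c)ᵀ A⁻¹ (μ_t − μ_c)`. -/
theorem linear_propensity_coefficients {k : ℕ}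
    {Ω : Type*} [MeasurableSpace Ω] (μ : Measure Ω) [IsProbabilityMeasure μ]
    (X : Ω → Fin k → ℝ) (hX : Measurable X) (hX2 : MemLp X 2 μ)
    (a0 : ℝ) (a1 : Fin k → ℝ)
    (e : Ω → ℝ) (he : ∀ ω, e ω = a0 + a1 ⬝ᵥ X ω)
    (he01 : ∀ ω, 0 ≤ e ω ∧ e ω ≤ 1)
    (p : ℝ) (hp : p = ∫ ω, e ω ∂μ) (hp0 : 0 < p) (hp1 : p < 1)
    (μt μc μall : Fin k → ℝ)
    (hμt : μt = p⁻¹ • ∫ ω, e ω • X ω ∂μ)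
    (hμc : μc = (1 - p)⁻¹ • ∫ ω, (1 - e ω) • X ω ∂μ)
    (hμall : μall = ∫ ω, X ω ∂μ)
    (Sigt Sigc A : Matrix (Fin k) (Fin k) ℝ)
    (hSigt : ∀ i j, Sigt i j = p⁻¹ * ∫ ω, e ω * ((X ω i - μt i) * (X ω j - μt j)) ∂μ)
    (hSigc : ∀ i j, Sigc i j =
      (1 - p)⁻¹ * ∫ ω, (1 - e ω) * ((X ω i - μc i) * (X ω j - μc j)) ∂μ)
    (hA : A = p • Sigt + (1 - p) • Sigc) (hApd : A.PosDef)
    (c : ℝ) (hc : c = (μt - μc) ⬝ᵥ A⁻¹.mulVec (μt - μc)) :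
    a1 = (p * (1 - p) / (1 + p * (1 - p) * c)) • A⁻¹.mulVec (μt - μc) ∧
    a0 = p - a1 ⬝ᵥ μall :=
  linear_propensity_coefficients_general μ X hX2 a0 a1 e he he01 p hp hp0 hp1 μt μc μall hμt hμc
    hμall Sigt Sigc A hSigt hSigc hA hApd c hc
end

section
/- If the propensity score satisfies 1/e(x) = b₀ + (1/p)·b₁ᵀΣ_t⁻¹(x − μ_t) for all x in the support of X, where p = P(Z=1) = E(e(X)), μ_t = E(X|Z=1), Σ_t = Var(X|Z=1) invertible, then necessarily b₀ = 1/p and b₁ = E(X) − μ_t. -/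
open MeasureTheory Matrix

/-!
Write `d = X - μ_t`. Since `μ_t` is the `e`-weighted mean of `X`, `E(e d) = 0`, so integrating
`e (b₀ + c ⬝ d) = 1` (with `c = p⁻¹ b₁ᵀ Σ_t⁻¹`) gives `p b₀ = 1`. Multiplying the identity by `d`
before integrating, the `b₀` term vanishes for the same reason and the linear term becomes the
weighted second moment `p Σ_t`, so `E(d) = c (p Σ_t) = b₁`.
-/

section WeightedMoments

variable {Ω : Type*} [MeasurableSpace Ω] {μ : Measure Ω} {ι : Type*} [Fintype ι]

theorem integral_mul_sub_weightedMean_eq_zero {w : Ω → ℝ} {X : Ω → ι → ℝ}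
    (hw : Integrable w μ) (hwX : ∀ i, Integrable (fun ω => w ω * X ω i) μ)
    (hw0 : ∫ ω, w ω ∂μ ≠ 0) (i : ι) :
    ∫ ω, w ω * (X ω i - ((∫ ω, w ω ∂μ)⁻¹ • ∫ ω, w ω • X ω ∂μ) i) ∂μ = 0 := by
  rw [Pi.smul_apply, eval_integral (f := fun ω => w ω • X ω) hwX, smul_eq_mul]
  simp_rw [mul_sub]
  rw [integral_sub (hwX i) (hw.mul_const _), integral_mul_const, mul_inv_cancel_left₀ hw0]
  exact sub_self _

theorem integrable_dotProduct (c : ι → ℝ) {f : Ω → ι → ℝ}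
    (hf : ∀ i, Integrable (fun ω => f ω i) μ) :
    Integrable (fun ω => c ⬝ᵥ f ω) μ :=
  integrable_finsetSum _ fun i _ => (hf i).const_mul (c i)

theorem integral_dotProduct (c : ι → ℝ) {f : Ω → ι → ℝ}
    (hf : ∀ i, Integrable (fun ω => f ω i) μ) :
    ∫ ω, c ⬝ᵥ f ω ∂μ = c ⬝ᵥ fun i => ∫ ω, f ω i ∂μ := by
  simp only [dotProduct]
  rw [integral_finsetSum _ fun i _ => (hf i).const_mul (c i)]
  simp only [integral_const_mul]

variable {w : Ω → ℝ} {d : Ω → ι → ℝ} {b : ℝ} {c : ι → ℝ}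

theorem mul_integral_eq_one_of_mul_affine_eq_one [IsProbabilityMeasure μ]
    (hw : Integrable w μ) (hwd : ∀ i, Integrable (fun ω => w ω * d ω i) μ)
    (hcenter : ∀ i, ∫ ω, w ω * d ω i ∂μ = 0)
    (h : ∀ᵐ ω ∂μ, w ω * (b + c ⬝ᵥ d ω) = 1) :
    b * ∫ ω, w ω ∂μ = 1 := by
  have hexpand : ∀ ω, w ω * (b + c ⬝ᵥ d ω) = w ω * b + c ⬝ᵥ (w ω • d ω) := fun ω => by
    rw [mul_add, dotProduct_smul, smul_eq_mul]
  have hwd' : ∀ i, Integrable (fun ω => (w ω • d ω) i) μ := hwd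
  calc b * ∫ ω, w ω ∂μ = ∫ ω, w ω * (b + c ⬝ᵥ d ω) ∂μ := by
        simp_rw [hexpand]
        rw [integral_add (hw.mul_const b) (integrable_dotProduct c hwd'),
          integral_dotProduct c hwd', integral_mul_const]
        simp [hcenter, mul_comm]
    _ = 1 := by simp [integral_congr_ae h]

theorem integral_eq_vecMul_weightedSecondMoment (j : ι)
    (hwd : ∀ i, Integrable (fun ω => w ω * d ω i) μ)
    (hwdd : ∀ i, Integrable (fun ω => w ω * (d ω i * d ω j)) μ)
    (hcenter : ∀ i, ∫ ω, w ω * d ω i ∂μ = 0)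
    (h : ∀ᵐ ω ∂μ, w ω * (b + c ⬝ᵥ d ω) = 1) :
    ∫ ω, d ω j ∂μ = (c ᵥ* Matrix.of fun i j => ∫ ω, w ω * (d ω i * d ω j) ∂μ) j := by
  have hpt : ∀ᵐ ω ∂μ, d ω j = b * (w ω * d ω j) + c ⬝ᵥ fun i => w ω * (d ω i * d ω j) := by
    filter_upwards [h] with ω hω
    have hmoment : (c ⬝ᵥ fun i => w ω * (d ω i * d ω j)) = (w ω * d ω j) * (c ⬝ᵥ d ω) := by
      rw [← smul_eq_mul (w ω * d ω j), ← dotProduct_smul]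
      congr 1
      ext i
      simp only [Pi.smul_apply, smul_eq_mul]
      ring
    rw [hmoment]
    linear_combination (-d ω j) * hω
  rw [integral_congr_ae hpt, integral_add ((hwd j).const_mul b) (integrable_dotProduct c hwdd),
    integral_const_mul, hcenter, integral_dotProduct c hwdd, mul_zero, zero_add]
  rfl

end WeightedMoments

theorem inverse_linear_propensity_coefficients_general {k : ℕ}
    {Ω : Type*} [MeasurableSpace Ω] (μ : Measure Ω) [IsProbabilityMeasure μ]
    (X : Ω → Fin k → ℝ) (hX2 : MemLp X 2 μ)
    (e : Ω → ℝ) (he_meas : Measurable e)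
    (he01 : ∀ ω, 0 < e ω ∧ e ω < 1)
    (p : ℝ) (hp : p = ∫ ω, e ω ∂μ) (hp0 : 0 < p)
    (μt μall : Fin k → ℝ)
    (hμt : μt = p⁻¹ • ∫ ω, e ω • X ω ∂μ)
    (hμall : μall = ∫ ω, X ω ∂μ)
    (Sigt : Matrix (Fin k) (Fin k) ℝ)
    (hSigt : ∀ i j, Sigt i j = p⁻¹ * ∫ ω, e ω * ((X ω i - μt i) * (X ω j - μt j)) ∂μ)
    (hSigtinv : IsUnit Sigt.det)
    (b0 : ℝ) (b1 : Fin k → ℝ)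
    (hform : ∀ ω, e ω * (b0 + p⁻¹ * (b1 ⬝ᵥ Sigt⁻¹.mulVec (X ω - μt))) = 1) :
    b0 = p⁻¹ ∧ b1 = μall - μt := by
  have hXi : ∀ i, Integrable (fun ω => X ω i) μ := fun i => (hX2.eval i).integrable one_le_two
  have hweight : ∀ {f : Ω → ℝ}, Integrable f μ → Integrable (fun ω => e ω * f ω) μ := fun hf =>
    hf.bdd_mul he_meas.aestronglyMeasurable <| ae_of_all _ fun ω => by
      simpa [abs_of_pos (he01 ω).1] using (he01 ω).2.le
  have he : Integrable e μ := by simpa using hweight (integrable_const (1 : ℝ))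
  have hwd : ∀ i, Integrable (fun ω => e ω * (X ω i - μt i)) μ := fun i =>
    hweight ((hXi i).sub (integrable_const _))
  have hwdd : ∀ i j, Integrable (fun ω => e ω * ((X ω i - μt i) * (X ω j - μt j))) μ :=
    fun i j => hweight <|
      ((hX2.eval i).sub (memLp_const _)).integrable_mul ((hX2.eval j).sub (memLp_const _))
  have hcenter : ∀ i, ∫ ω, e ω * (X ω i - μt i) ∂μ = 0 := by
    subst hμt hp
    exact integral_mul_sub_weightedMean_eq_zero he (fun i => hweight (hXi i)) hp0.ne'
  set c := p⁻¹ • (b1 ᵥ* Sigt⁻¹)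
  have hform' : ∀ᵐ ω ∂μ, e ω * (b0 + c ⬝ᵥ fun i => X ω i - μt i) = 1 := ae_of_all _ fun ω => by
    rw [smul_dotProduct, ← dotProduct_mulVec]
    exact hform ω
  refine ⟨eq_inv_of_mul_eq_one_left ?_, funext fun j => ?_⟩
  · rw [hp]
    exact mul_integral_eq_one_of_mul_affine_eq_one he hwd hcenter hform'
  have hmoment := integral_eq_vecMul_weightedSecondMoment (d := fun ω i => X ω i - μt i) j
    hwd (hwdd · j) hcenter hform'
  calc b1 j = (c ᵥ* (p • Sigt)) j := by
        rw [vecMul_smul, smul_vecMul, vecMul_vecMul, nonsing_inv_mul _ hSigtinv, vecMul_one,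
          smul_smul, mul_inv_cancel₀ hp0.ne', one_smul]
    _ = ∫ ω, X ω j - μt j ∂μ := by
        rw [hmoment]
        congr 2
        ext i l
        simp [hSigt, hp0.ne']
    _ = (μall - μt) j := by
        rw [integral_sub (hXi j) (integrable_const _), hμall, Pi.sub_apply,
          eval_integral (f := X) hXi]
        simp

/-- If the reciprocal propensity score is of the form
`1/e(x) = b₀ + (1/p) b₁ᵀ Σ_t⁻¹ (x − μ_t)` on the support of `X`, where
`p = E(e(X))`, `μ_t = E(X e(X))/p` and `Σ_t = E((X−μ_t)(X−μ_t)ᵀ e(X))/p` is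
invertible, then necessarily `b₀ = 1/p` and `b₁ = E(X) − μ_t`. -/
theorem inverse_linear_propensity_coefficients {k : ℕ}
    {Ω : Type*} [MeasurableSpace Ω] (μ : Measure Ω) [IsProbabilityMeasure μ]
    (X : Ω → Fin k → ℝ) (hX : Measurable X) (hX2 : MemLp X 2 μ)
    (e : Ω → ℝ) (he_meas : Measurable e)
    (he01 : ∀ ω, 0 < e ω ∧ e ω < 1)
    (p : ℝ) (hp : p = ∫ ω, e ω ∂μ) (hp0 : 0 < p) (hp1 : p < 1)
    (μt μall : Fin k → ℝ)
    (hμt : μt = p⁻¹ • ∫ ω, e ω • X ω ∂μ)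
    (hμall : μall = ∫ ω, X ω ∂μ)
    (Sigt : Matrix (Fin k) (Fin k) ℝ)
    (hSigt : ∀ i j, Sigt i j = p⁻¹ * ∫ ω, e ω * ((X ω i - μt i) * (X ω j - μt j)) ∂μ)
    (hSigtinv : IsUnit Sigt.det)
    (b0 : ℝ) (b1 : Fin k → ℝ)
    (hform : ∀ ω, e ω * (b0 + p⁻¹ * (b1 ⬝ᵥ Sigt⁻¹.mulVec (X ω - μt))) = 1) :
    b0 = p⁻¹ ∧ b1 = μall - μt :=
  inverse_linear_propensity_coefficients_general μ X hX2 e he_meas he01 p hp hp0 μt μall hμt hμall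
    Sigt hSigt hSigtinv b0 b1 hform
end

section
/- If the propensity score is linear, e(x) = a₀ + a₁ᵀx, with a₀, a₁ as in the previous lemma (a₁ = [p(1−p)/(1+p(1−p)c)]A⁻¹(μ_t − μ_c), a₀ = p − a₁ᵀμ), then E[e(X)(1 − e(X))] = p(1−p)/(1 + p(1−p)c). -/
/-!
Centering by `a₀` makes `E[e(X)] = p`, so `E[e(1 − e)] = p(1 − p) − Var e(X)`, and
`Var e(X) = a₁ᵀ Var(X) a₁`. Writing `m = μ_t − μ_c`, `s = p(1 − p)` and `a₁ = t A⁻¹ m`,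
the decomposition `Var(X) = A + s m mᵀ` gives `a₁ᵀ Var(X) a₁ = t² c (1 + s c)`; for
`t = s / (1 + s c)` this is `s² c / (1 + s c)`, and `s − s² c / (1 + s c) = s / (1 + s c)`.
-/

open MeasureTheory Matrix ProbabilityTheory

section QuadraticForm

variable {n R : Type*} [Fintype n] [CommSemiring R]

theorem dotProduct_add_smul_vecMulVec_mulVec_of_mulVec_eq {A : Matrix n n R} {m w : n → R}
    (hw : A *ᵥ w = m) (s : R) :
    w ⬝ᵥ (A + s • vecMulVec m m) *ᵥ w = (m ⬝ᵥ w) * (1 + s * (m ⬝ᵥ w)) := by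
  rw [add_mulVec, smul_mulVec, vecMulVec_mulVec, hw, dotProduct_add, dotProduct_smul,
    dotProduct_smul, dotProduct_comm w m]
  simp only [MulOpposite.smul_eq_mul_unop, MulOpposite.unop_op, smul_eq_mul]
  ring

end QuadraticForm

section LinearFunctional

variable {ι Ω : Type*} [Fintype ι] [MeasurableSpace Ω] {μ : Measure Ω} {X : Ω → ι → ℝ}

theorem MeasureTheory.MemLp.const_dotProduct {p : ENNReal} (hX : MemLp X p μ) (a : ι → ℝ) :
    MemLp (fun ω ↦ a ⬝ᵥ X ω) p μ := by
  simp only [dotProduct]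
  exact memLp_finsetSum _ fun i _ ↦ (hX.eval i).const_mul (a i)

theorem integral_const_dotProduct (hX : Integrable X μ) (a : ι → ℝ) :
    ∫ ω, a ⬝ᵥ X ω ∂μ = a ⬝ᵥ ∫ ω, X ω ∂μ := by
  simp only [dotProduct]
  rw [integral_finsetSum _ fun i _ ↦ (hX.eval i).const_mul (a i)]
  simp only [integral_const_mul, eval_integral hX.eval]

theorem variance_const_dotProduct [IsFiniteMeasure μ] (hX : MemLp X 2 μ) (a : ι → ℝ) :
    Var[fun ω ↦ a ⬝ᵥ X ω; μ] =
      a ⬝ᵥ (of fun i j ↦ cov[fun ω ↦ X ω i, fun ω ↦ X ω j; μ]) *ᵥ a := by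
  simp only [dotProduct]
  rw [variance_fun_sum fun i ↦ (hX.eval i).const_mul (a i)]
  simp only [covariance_const_mul_left, covariance_const_mul_right, mulVec, dotProduct, of_apply,
    Finset.mul_sum]
  exact Finset.sum_congr rfl fun i _ ↦ Finset.sum_congr rfl fun j _ ↦ by ring

theorem covariance_eval_eq_integral (hX : Integrable X μ) (i j : ι) :
    cov[fun ω ↦ X ω i, fun ω ↦ X ω j; μ] =
      ∫ ω, (X ω i - (∫ ω, X ω ∂μ) i) * (X ω j - (∫ ω, X ω ∂μ) j) ∂μ := by
  simp only [covariance, eval_integral hX.eval]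

end LinearFunctional

theorem integral_mul_one_sub {Ω : Type*} [MeasurableSpace Ω] {μ : Measure Ω}
    [IsProbabilityMeasure μ] {Y : Ω → ℝ} (hY : MemLp Y 2 μ) :
    ∫ ω, Y ω * (1 - Y ω) ∂μ = μ[Y] * (1 - μ[Y]) - Var[Y; μ] := by
  have hsq : ∀ ω, Y ω * (1 - Y ω) = Y ω - Y ω ^ 2 := fun ω ↦ by ring
  rw [variance_eq_sub hY, integral_congr_ae (.of_forall hsq),
    integral_sub (hY.integrable one_le_two) hY.integrable_sq]
  simp only [Pi.pow_apply]
  ring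

theorem expectation_propensity_variance_general {k : ℕ}
    {Ω : Type*} [MeasurableSpace Ω] (μ : Measure Ω) [IsProbabilityMeasure μ]
    (X : Ω → Fin k → ℝ) (hX2 : MemLp X 2 μ)
    (p : ℝ) (hp0 : 0 < p) (hp1 : p < 1)
    (μt μc μall : Fin k → ℝ) (hμall : μall = ∫ ω, X ω ∂μ)
    (A Sig : Matrix (Fin k) (Fin k) ℝ) (hApd : A.PosDef)
    (hSig : ∀ i j, Sig i j = ∫ ω, (X ω i - μall i) * (X ω j - μall j) ∂μ)
    (hdecomp : Sig = A + (p * (1 - p)) • vecMulVec (μt - μc) (μt - μc))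
    (c : ℝ) (hc : c = (μt - μc) ⬝ᵥ A⁻¹.mulVec (μt - μc))
    (a0 : ℝ) (a1 : Fin k → ℝ)
    (ha1 : a1 = (p * (1 - p) / (1 + p * (1 - p) * c)) • A⁻¹.mulVec (μt - μc))
    (ha0 : a0 = p - a1 ⬝ᵥ μall)
    (e : Ω → ℝ) (he : ∀ ω, e ω = a0 + a1 ⬝ᵥ X ω) :
    ∫ ω, e ω * (1 - e ω) ∂μ = p * (1 - p) / (1 + p * (1 - p) * c) := by
  have hXint : Integrable X μ := hX2.integrable one_le_two
  have hden : 0 < 1 + p * (1 - p) * c := by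
    have hs : 0 < p * (1 - p) := mul_pos hp0 (by linarith)
    have hc0 : 0 ≤ c := by
      simpa [hc] using hApd.inv.posSemidef.dotProduct_mulVec_nonneg (μt - μc)
    positivity
  have hlin : MemLp (fun ω ↦ a1 ⬝ᵥ X ω) 2 μ := hX2.const_dotProduct a1
  have he_eq : e = fun ω ↦ a0 + a1 ⬝ᵥ X ω := funext he
  have he_mean : μ[e] = p := by
    rw [he_eq, integral_add (integrable_const a0) (hlin.integrable one_le_two), integral_const,
      integral_const_dotProduct hXint, ← hμall, ha0]
    simp
  have hSig_cov : Sig = of fun i j ↦ cov[fun ω ↦ X ω i, fun ω ↦ X ω j; μ] := by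
    ext i j
    rw [hSig, of_apply, covariance_eval_eq_integral hXint, hμall]
  have he_var : Var[e; μ] = a1 ⬝ᵥ Sig *ᵥ a1 := by
    rw [he_eq, variance_const_add hlin.aestronglyMeasurable,
      variance_const_dotProduct hX2, hSig_cov]
  have hAw : A *ᵥ A⁻¹ *ᵥ (μt - μc) = μt - μc := by
    rw [mulVec_mulVec, mul_nonsing_inv A hApd.det_pos.ne'.isUnit, one_mulVec]
  rw [integral_mul_one_sub (he_eq ▸ (memLp_const a0).add hlin), he_mean, he_var, hdecomp, ha1,
    mulVec_smul, dotProduct_smul, smul_dotProduct,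
    dotProduct_add_smul_vecMulVec_mulVec_of_mulVec_eq hAw, ← hc]
  simp only [smul_eq_mul]
  field_simp
  ring

/-- If the propensity score is linear, `e(x) = a₀ + a₁ᵀx`, with
`a₁ = [p(1−p)/(1+p(1−p)c)] A⁻¹ (μ_t − μ_c)` and `a₀ = p − a₁ᵀμ`, then
`E[e(X)(1 − e(X))] = p(1−p)/(1 + p(1−p)c)`. -/
theorem expectation_propensity_variance {k : ℕ}
    {Ω : Type*} [MeasurableSpace Ω] (μ : Measure Ω) [IsProbabilityMeasure μ]
    (X : Ω → Fin k → ℝ) (hX : Measurable X) (hX2 : MemLp X 2 μ)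
    (p : ℝ) (hp0 : 0 < p) (hp1 : p < 1)
    (μt μc μall : Fin k → ℝ) (hμall : μall = ∫ ω, X ω ∂μ)
    (A Sig : Matrix (Fin k) (Fin k) ℝ) (hApd : A.PosDef)
    (hSig : ∀ i j, Sig i j = ∫ ω, (X ω i - μall i) * (X ω j - μall j) ∂μ)
    (hdecomp : Sig = A + (p * (1 - p)) • vecMulVec (μt - μc) (μt - μc))
    (c : ℝ) (hc : c = (μt - μc) ⬝ᵥ A⁻¹.mulVec (μt - μc))
    (a0 : ℝ) (a1 : Fin k → ℝ)
    (ha1 : a1 = (p * (1 - p) / (1 + p * (1 - p) * c)) • A⁻¹.mulVec (μt - μc))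
    (ha0 : a0 = p - a1 ⬝ᵥ μall)
    (e : Ω → ℝ) (he : ∀ ω, e ω = a0 + a1 ⬝ᵥ X ω) :
    ∫ ω, e ω * (1 - e ω) ∂μ = p * (1 - p) / (1 + p * (1 - p) * c) :=
  expectation_propensity_variance_general μ X hX2 p hp0 hp1 μt μc μall hμall A Sig hApd hSig hdecomp
    c hc a0 a1 ha1 ha0 e he
end
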